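/- arXiv:2011.04903 — 2 statements merged into one kernel-verified Lean document; each statement's English description precedes it below -/
import Mathlib

section
/- Any set of d−1 mutually orthonormal product vectors in C^{d1} ⊗ C^{d2} (d = d1·d2) whose orthogonal complement is one-dimensional has the property that the unique (up to phase) unit vector orthogonal to all of them is itself a product vector; equivalently, there is no unextendible product basis of size d−1 in any bipartite system. -/
noncomputable section

def ProdVec (d1 d2 : ℕ) (ψ : EuclideanSpace ℂ (Fin d1 × Fin d2)) : Prop :=
  ∃ (u : Fin d1 → ℂ) (v : Fin d2 → ℂ), ∀ p : Fin d1 × Fin d2, ψ p = u p.1 * v p.2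

/-!
Write `ψᵢ = uᵢ ⊗ vᵢ` and let `x` be the unit vector completing them to an orthonormal basis, so
that `∑ ψᵢ ψᵢ* + x x* = 1`. The partial transpose on the second factor sends `ψᵢ ψᵢ*` to
`ψ̃ᵢ ψ̃ᵢ*` with `ψ̃ᵢ = uᵢ ⊗ v̄ᵢ`; these are again orthonormal, so they too are completed by a unit
vector `y`, and as the identity is fixed, the partial transpose of `x x*` is `y y*`. In
coordinates, `x(j,k) x̄(j',k') = y(j,k') ȳ(j',k)`, and fixing `(j',k')` with `x(j',k') ≠ 0`
exhibits `x` as a product.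
-/

open ComplexConjugate Module

section Completeness

variable {𝕜 E ι : Type*} [RCLike 𝕜] [NormedAddCommGroup E] [InnerProductSpace 𝕜 E]

theorem exists_norm_eq_one_forall_inner_eq_zero [Fintype ι] [FiniteDimensional 𝕜 E] (f : ι → E)
    (hcard : Fintype.card ι < finrank 𝕜 E) : ∃ g : E, ‖g‖ = 1 ∧ ∀ i, inner 𝕜 (f i) g = 0 := by
  have hspan : Submodule.span 𝕜 (Set.range f) ≠ ⊤ := fun h => by
    have := finrank_range_le_card (R := 𝕜) f
    rw [Set.finrank, h, finrank_top] at this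
    omega
  obtain ⟨x, hx, hx0⟩ := Submodule.exists_mem_ne_zero_of_ne_bot
    (mt Submodule.orthogonal_eq_bot_iff.mp hspan)
  refine ⟨(‖x‖⁻¹ : 𝕜) • x, norm_smul_inv_norm hx0, fun i => ?_⟩
  rw [inner_smul_right, Submodule.inner_right_of_mem_orthogonal
    (Submodule.subset_span (Set.mem_range_self i)) hx, mul_zero]

theorem Orthonormal.option_elim {f : ι → E} (hf : Orthonormal 𝕜 f) {g : E} (hg : ‖g‖ = 1)
    (hfg : ∀ i, inner 𝕜 (f i) g = 0) : Orthonormal 𝕜 fun o : Option ι => o.elim g f := by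
  refine ⟨fun o => o.rec hg hf.1, ?_⟩
  rintro (_ | i) (_ | j) hij
  · exact absurd rfl hij
  · exact inner_eq_zero_symm.mp (hfg j)
  · exact hfg i
  · exact hf.2 fun h => hij (congrArg some h)

theorem Orthonormal.sum_mul_conj_eq_ite [Fintype ι] {κ : Type*} [Fintype κ] [DecidableEq κ]
    {f : ι → EuclideanSpace 𝕜 κ} (hf : Orthonormal 𝕜 f)
    (hcard : Fintype.card ι = Fintype.card κ) (p q : κ) :
    ∑ i, f i p * conj (f i q) = if p = q then 1 else 0 := by
  have hspan := hf.linearIndependent.span_eq_top_of_card_eq_finrank' (by simpa using hcard)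
  have h := (OrthonormalBasis.mk hf hspan.ge).sum_inner_mul_inner
    (EuclideanSpace.single p 1) (EuclideanSpace.single q 1)
  simp only [OrthonormalBasis.coe_mk, EuclideanSpace.inner_single_left,
    EuclideanSpace.inner_single_right, map_one, one_mul] at h
  simpa [PiLp.single_apply, apply_ite, eq_comm] using h

theorem Orthonormal.sum_mul_conj_add_mul_conj_eq_ite [Fintype ι] {κ : Type*} [Fintype κ]
    [DecidableEq κ] {f : ι → EuclideanSpace 𝕜 κ} (hf : Orthonormal 𝕜 f)
    {g : EuclideanSpace 𝕜 κ} (hg : ‖g‖ = 1) (hfg : ∀ i, inner 𝕜 (f i) g = 0)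
    (hcard : Fintype.card ι + 1 = Fintype.card κ) (p q : κ) :
    ∑ i, f i p * conj (f i q) + g p * conj (g q) = if p = q then 1 else 0 := by
  rw [← (hf.option_elim hg hfg).sum_mul_conj_eq_ite (by simpa using hcard) p q,
    Fintype.sum_option, add_comm]
  rfl

end Completeness

section TensorVec

variable {α β ι : Type*}

def tensorVec (u : α → ℂ) (v : β → ℂ) : EuclideanSpace ℂ (α × β) :=
  WithLp.toLp 2 fun p => u p.1 * v p.2

@[simp]
theorem tensorVec_apply (u : α → ℂ) (v : β → ℂ) (p : α × β) :
    tensorVec u v p = u p.1 * v p.2 :=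
  rfl

variable [Fintype α] [Fintype β]

theorem inner_tensorVec (u u' : α → ℂ) (v v' : β → ℂ) :
    inner ℂ (tensorVec u v) (tensorVec u' v') = (star u ⬝ᵥ u') * (star v ⬝ᵥ v') := by
  simp only [tensorVec, EuclideanSpace.inner_toLp_toLp, dotProduct, Fintype.sum_prod_type,
    Finset.sum_mul_sum, Pi.star_apply, star_mul']
  exact Finset.sum_congr rfl fun _ _ => Finset.sum_congr rfl fun _ _ => by ring

theorem inner_tensorVec_star (u u' : α → ℂ) (v v' : β → ℂ) :
    inner ℂ (tensorVec u (star v)) (tensorVec u' (star v')) =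
      (star u ⬝ᵥ u') * star (star v ⬝ᵥ v') := by
  rw [inner_tensorVec, Matrix.star_dotProduct_star, dotProduct_comm v' (star v)]

theorem Orthonormal.tensorVec_star {u : ι → α → ℂ} {v : ι → β → ℂ}
    (h : Orthonormal ℂ fun i => tensorVec (u i) (v i)) :
    Orthonormal ℂ fun i => tensorVec (u i) (star (v i)) := by
  classical
  rw [orthonormal_iff_ite] at h ⊢
  intro i j
  have hij := h i j
  rw [inner_tensorVec] at hij
  rw [inner_tensorVec_star]
  split_ifs at hij ⊢ with hij'
  · subst hij'
    have hself : star (star (u i) ⬝ᵥ u i) = star (u i) ⬝ᵥ u i := by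
      rw [← Matrix.star_dotProduct_star, star_star]
    rw [← star_one, ← hij, star_mul', hself]
  · rcases mul_eq_zero.mp hij with h0 | h0 <;> simp [h0]

end TensorVec

/-- The hypothesis says that the partial transpose of `x x*` is `y y*`. -/
theorem prodVec_of_mul_conj_eq {d1 d2 : ℕ} (x y : EuclideanSpace ℂ (Fin d1 × Fin d2))
    (h : ∀ j j' k k', x (j, k) * conj (x (j', k')) = y (j, k') * conj (y (j', k))) :
    ProdVec d1 d2 x := by
  by_cases hx : ∀ p, x p = 0
  · exact ⟨0, 0, fun p => by simp [hx p]⟩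
  push Not at hx
  obtain ⟨⟨j₀, k₀⟩, hx₀⟩ := hx
  have hc : conj (x (j₀, k₀)) ≠ 0 := (map_ne_zero _).mpr hx₀
  refine ⟨fun j => y (j, k₀) / conj (x (j₀, k₀)), fun k => conj (y (j₀, k)), ?_⟩
  rintro ⟨j, k⟩
  field_simp
  exact h j j₀ k k₀

theorem ProdVec.smul {d1 d2 : ℕ} {x : EuclideanSpace ℂ (Fin d1 × Fin d2)} (hx : ProdVec d1 d2 x)
    (c : ℂ) : ProdVec d1 d2 (c • x) := by
  obtain ⟨u, v, huv⟩ := hx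
  exact ⟨c • u, v, fun p => by simp [huv p, mul_assoc]⟩

theorem prodVec_of_orthonormal_tensorVec {ι : Type*} [Fintype ι] {d1 d2 : ℕ}
    (hcard : Fintype.card ι + 1 = d1 * d2) {u : ι → Fin d1 → ℂ} {v : ι → Fin d2 → ℂ}
    (hON : Orthonormal ℂ fun i => tensorVec (u i) (v i)) {x : EuclideanSpace ℂ (Fin d1 × Fin d2)}
    (hx : ‖x‖ = 1) (hxψ : ∀ i, inner ℂ (tensorVec (u i) (v i)) x = 0) : ProdVec d1 d2 x := by
  have hcard' : Fintype.card ι + 1 = Fintype.card (Fin d1 × Fin d2) := by simpa using hcard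
  obtain ⟨y, hy, hyψ⟩ := exists_norm_eq_one_forall_inner_eq_zero
    (𝕜 := ℂ) (fun i => tensorVec (u i) (star (v i))) (by rw [finrank_euclideanSpace]; omega)
  refine prodVec_of_mul_conj_eq x y fun j j' k k' => ?_
  have hxx := hON.sum_mul_conj_add_mul_conj_eq_ite hx hxψ hcard' (j, k) (j', k')
  have hyy := hON.tensorVec_star.sum_mul_conj_add_mul_conj_eq_ite hy hyψ hcard' (j, k') (j', k)
  -- partial transposition maps `∑ ψᵢ ψᵢ*` to `∑ ψ̃ᵢ ψ̃ᵢ*` and fixes the identity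
  have hsum : ∑ i, tensorVec (u i) (v i) (j, k) * conj (tensorVec (u i) (v i) (j', k')) =
      ∑ i, tensorVec (u i) (star (v i)) (j, k') * conj (tensorVec (u i) (star (v i)) (j', k)) :=
    Finset.sum_congr rfl fun i _ => by
      simp only [tensorVec_apply, Pi.star_apply, Complex.star_def, map_mul, Complex.conj_conj]
      ring
  have hδ : (if (j, k) = (j', k') then (1 : ℂ) else 0) = if (j, k') = (j', k) then 1 else 0 := by
    simp only [Prod.mk.injEq, @eq_comm _ k' k]
  rw [hsum, hδ, ← hyy] at hxx
  exact add_left_cancel hxx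

theorem stmt15_general (d1 d2 : ℕ)
    (ψ : Fin (d1 * d2 - 1) → EuclideanSpace ℂ (Fin d1 × Fin d2))
    (hON : Orthonormal ℂ ψ)
    (hprod : ∀ i, ProdVec d1 d2 (ψ i)) :
    ∀ φ : EuclideanSpace ℂ (Fin d1 × Fin d2),
      φ ≠ 0 → (∀ i, inner ℂ (ψ i) φ = (0 : ℂ)) → ProdVec d1 d2 φ := by
  intro φ hφ hφψ
  choose u v huv using hprod
  obtain rfl : ψ = fun i => tensorVec (u i) (v i) := funext fun i => PiLp.ext (huv i)
  obtain ⟨p, -⟩ : ∃ p, φ p ≠ 0 := by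
    by_contra! h
    exact hφ (PiLp.ext h)
  have hcard : Fintype.card (Fin (d1 * d2 - 1)) + 1 = d1 * d2 := by
    have := Fintype.card_pos_iff.mpr ⟨p⟩
    simp only [Fintype.card_fin, Fintype.card_prod] at this ⊢
    omega
  have hunit := prodVec_of_orthonormal_tensorVec hcard hON (norm_smul_inv_norm (𝕜 := ℂ) hφ)
    fun i => by rw [inner_smul_right, hφψ i, mul_zero]
  simpa [smul_smul, hφ] using hunit.smul (‖φ‖ : ℂ)

/-- No unextendible product basis of size `d - 1`: any nonzero vector orthogonal to `d - 1`
mutually orthonormal product vectors in `C^{d1} ⊗ C^{d2}` is itself a product vector. -/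
theorem stmt15 (d1 d2 : ℕ) (hd1 : 2 ≤ d1) (hd2 : 2 ≤ d2)
    (ψ : Fin (d1 * d2 - 1) → EuclideanSpace ℂ (Fin d1 × Fin d2))
    (hON : Orthonormal ℂ ψ)
    (hprod : ∀ i, ProdVec d1 d2 (ψ i)) :
    ∀ φ : EuclideanSpace ℂ (Fin d1 × Fin d2),
      φ ≠ 0 → (∀ i, inner ℂ (ψ i) φ = (0 : ℂ)) → ProdVec d1 d2 φ :=
  stmt15_general d1 d2 ψ hON hprod
end
end

section
/- Let S = {ψ_1, ..., ψ_N} ⊆ C^d (d = d1·d2, 2 ≤ d1 ≤ d2) and suppose there exists an index i such that dim span(S \ {ψ_i}) = d2 and ψ_i has nonzero component in span(S \ {ψ_i})^⊥. Write ψ_i = ξ + β·η with ξ ∈ span(S\{ψ_i}), η a unit vector in the orthogonal complement, β ≠ 0. If ξ = 0, then there exists a unitary U ∈ U(d) mapping every element of S to a product vector in C^{d1} ⊗ C^{d2}. -/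
/-!
Choose an orthonormal basis `b` of `ℂ^{d1} ⊗ ℂ^{d2}` indexed by `Fin d1 × Fin d2` whose row `0`
spans the `d2`-dimensional span `V` of the other states and with `b (1, 0) = η`. Every vector in
the span of one row of `b` has coordinates `e_a ⊗ v`, so `U = b.repr` sends each `ψ j` with
`j ≠ i` (in `V`, row `0`) and `ψ i = β • η` (row `1`) to product vectors.
-/

noncomputable section

open Submodule Module Fintype Set

theorem prodVec_of_apply_eq_zero_of_fst_ne {d1 d2 : ℕ} {x : EuclideanSpace ℂ (Fin d1 × Fin d2)}
    (a : Fin d1) (hx : ∀ p : Fin d1 × Fin d2, p.1 ≠ a → x p = 0) : ProdVec d1 d2 x :=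
  ⟨Pi.single a 1, fun k => x (a, k), fun ⟨a', k⟩ => by
    by_cases h : a' = a
    · subst h; simp
    · simp [h, hx (a', k) h]⟩

section

variable {𝕜 E ι : Type*} [RCLike 𝕜] [NormedAddCommGroup E] [InnerProductSpace 𝕜 E] [Fintype ι]

theorem OrthonormalBasis.repr_apply_eq_zero_of_mem_span_image (b : OrthonormalBasis ι 𝕜 E)
    {s : Set ι} {x : E} (hx : x ∈ span 𝕜 (b '' s)) {i : ι} (hi : i ∉ s) : b.repr x i = 0 := by
  rw [← b.coe_toBasis, Basis.mem_span_image] at hx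
  rw [← b.coe_toBasis_repr_apply]
  exact Finsupp.notMem_support_iff.mp fun h => hi (hx h)

variable [FiniteDimensional 𝕜 E] {κ : Type*} [Fintype κ]

theorem exists_orthonormalBasis_prod_of_mem_orthogonal (hE : finrank 𝕜 E = card ι * card κ)
    {V : Submodule 𝕜 E} (hV : finrank 𝕜 V = card κ) {η : E} (hη : η ∈ Vᗮ) (hη1 : ‖η‖ = 1)
    {a a' : ι} (ha : a ≠ a') (k' : κ) :
    ∃ b : OrthonormalBasis (ι × κ) 𝕜 E, V ≤ span 𝕜 (b '' {p | p.1 = a}) ∧ b (a', k') = η := by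
  classical
  let b₀ : OrthonormalBasis κ 𝕜 V :=
    (stdOrthonormalBasis 𝕜 V).reindex (Fintype.equivFinOfCardEq hV.symm).symm
  let v : ι × κ → E := fun p => if p.1 = a then b₀ p.2 else η
  have hv : Orthonormal 𝕜 (({p | p.1 = a} ∪ {(a', k')} : Set (ι × κ)).domRestrict v) := by
    rw [orthonormal_iff_ite]
    rintro ⟨⟨i, k⟩, hp⟩ ⟨⟨j, l⟩, hq⟩
    simp only [Set.domRestrict_apply, v, Subtype.mk.injEq, Prod.mk.injEq]
    by_cases hi : i = a <;> by_cases hj : j = a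
    · subst i j; simp [← Submodule.coe_inner, orthonormal_iff_ite.mp b₀.orthonormal]
    · simp [hi, hj, Ne.symm hj, inner_right_of_mem_orthogonal (b₀ k).2 hη]
    · simp [hi, hj, inner_left_of_mem_orthogonal (b₀ l).2 hη]
    · obtain ⟨rfl, rfl⟩ : i = a' ∧ k = k' := by simpa [hi] using hp
      obtain ⟨rfl, rfl⟩ : j = i ∧ l = k := by simpa [hj] using hq
      simp [hi, hη1]
  obtain ⟨b, hb⟩ := hv.exists_orthonormalBasis_extension_of_card_eq (by simpa using hE)
  refine ⟨b, fun x hx => ?_, by simpa [v, ha.symm] using hb (a', k') (Or.inr rfl)⟩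
  have hx' : x ∈ span 𝕜 (V.subtype '' range b₀) := by
    simpa using apply_mem_span_image_of_mem_span V.subtype (b₀.toBasis.mem_span ⟨x, hx⟩)
  refine span_mono ?_ hx'
  rintro _ ⟨_, ⟨k, rfl⟩, rfl⟩
  exact ⟨(a, k), rfl, by simpa [v] using hb (a, k) (Or.inl rfl)⟩

end

theorem OrthonormalBasis.prodVec_repr_of_mem_span_row {d1 d2 : ℕ} {E : Type*}
    [NormedAddCommGroup E] [InnerProductSpace ℂ E] (b : OrthonormalBasis (Fin d1 × Fin d2) ℂ E)
    {a : Fin d1} {x : E} (hx : x ∈ span ℂ (b '' {p | p.1 = a})) : ProdVec d1 d2 (b.repr x) :=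
  prodVec_of_apply_eq_zero_of_fst_ne a fun _ hp => b.repr_apply_eq_zero_of_mem_span_image hx hp

theorem stmt18_general (d1 d2 N : ℕ) (hd1 : 2 ≤ d1) (hd12 : d1 ≤ d2)
    (ψ : Fin N → EuclideanSpace ℂ (Fin d1 × Fin d2)) (i : Fin N)
    (hdim : Module.finrank ℂ (Submodule.span ℂ (ψ '' {j : Fin N | j ≠ i})) = d2)
    (η : EuclideanSpace ℂ (Fin d1 × Fin d2)) (β : ℂ)
    (hη : η ∈ (Submodule.span ℂ (ψ '' {j : Fin N | j ≠ i}))ᗮ)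
    (hηnorm : ‖η‖ = 1)
    (hψi : ψ i = β • η) :
    ∃ U : EuclideanSpace ℂ (Fin d1 × Fin d2) ≃ₗᵢ[ℂ] EuclideanSpace ℂ (Fin d1 × Fin d2),
      ∀ j : Fin N, ProdVec d1 d2 (U (ψ j)) := by
  obtain ⟨b, hVb, hbη⟩ := exists_orthonormalBasis_prod_of_mem_orthogonal
    (ι := Fin d1) (κ := Fin d2) (by simp) (by simpa using hdim) hη hηnorm
    (a := ⟨0, by omega⟩) (a' := ⟨1, hd1⟩) (by simp [Fin.ext_iff]) ⟨0, by omega⟩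
  refine ⟨b.repr, fun j => ?_⟩
  rcases eq_or_ne j i with rfl | hj
  · refine b.prodVec_repr_of_mem_span_row (a := ⟨1, hd1⟩) ?_
    rw [hψi, ← hbη]
    exact smul_mem _ _ (subset_span ⟨_, rfl, rfl⟩)
  · exact b.prodVec_repr_of_mem_span_row (hVb (subset_span ⟨j, hj, rfl⟩))

/-- Case (i) of Proposition 1: `ψ i = β • η` with `η` a unit vector orthogonal to the span of
the remaining states, which spans a subspace of dimension `d2`. Then the whole set can be
unitarily mapped to product vectors. -/
theorem stmt18 (d1 d2 N : ℕ) (hd1 : 2 ≤ d1) (hd12 : d1 ≤ d2)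
    (ψ : Fin N → EuclideanSpace ℂ (Fin d1 × Fin d2)) (i : Fin N)
    (hdim : Module.finrank ℂ (Submodule.span ℂ (ψ '' {j : Fin N | j ≠ i})) = d2)
    (η : EuclideanSpace ℂ (Fin d1 × Fin d2)) (β : ℂ)
    (hη : η ∈ (Submodule.span ℂ (ψ '' {j : Fin N | j ≠ i}))ᗮ)
    (hηnorm : ‖η‖ = 1) (hβ : β ≠ 0)
    (hψi : ψ i = β • η) :
    ∃ U : EuclideanSpace ℂ (Fin d1 × Fin d2) ≃ₗᵢ[ℂ] EuclideanSpace ℂ (Fin d1 × Fin d2),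
      ∀ j : Fin N, ProdVec d1 d2 (U (ψ j)) :=
  stmt18_general d1 d2 N hd1 hd12 ψ i hdim η β hη hηnorm hψi
end
end
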